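/- (Gessel–Xin constant-term extraction lemma.) Work in the field of iterated Laurent series K⟨⟨x_n, x_{n−1},…,x_0⟩⟩ = K((x_n))((x_{n−1}))⋯((x_0)) over K = ℚ(q), in which every rational function in x_0,…,x_n is identified with its unique iterated Laurent series expansion. Let m be a positive integer, let k ∈ {0,…,n}, let p(x_k) be a Laurent polynomial in x_k of degree at most m−1 with coefficients in the field of iterated Laurent series in the remaining variables x_0,…,x_{k−1},x_{k+1},…,x_n, let 0 ≤ i_1 ≤ ⋯ ≤ i_m ≤ n with all i_r ≠ k, and let c_1,…,c_m ∈ K∖{0} satisfy c_r ≠ c_s whenever i_r = i_s. Set f = p(x_k) / ∏_{r=1}^{m}(1 − x_k/(c_r x_{i_r})). Then CT_{x_k} f = ∑_{r : i_r > k} (f · (1 − x_k/(c_r x_{i_r})))|_{x_k = c_r x_{i_r}}. -/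

import Mathlib

noncomputable section

/-- The field `K = ℚ(q)`. -/
abbrev KK : Type := RatFunc ℚ

/-- Iterated Laurent series fields, bundled with their field structure:
`ILSpair 0 = K` and `ILSpair (m+1) = (ILSpair m)((x))`, the new Laurent-series
variable being the *outermost* one. -/
def ILSpair : ℕ → (α : Type) × Field α
  | 0 => ⟨KK, inferInstance⟩
  | (m+1) =>
    letI := (ILSpair m).2
    ⟨LaurentSeries (ILSpair m).1, inferInstance⟩

/-- The field of iterated Laurent series in `m` variables:
`ILS (n+1) = K((x_n))((x_{n-1}))⋯((x_0))`, layer `0` being the outermost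
variable `x_0`. -/
def ILS (m : ℕ) : Type := (ILSpair m).1

instance ILS.instField (m : ℕ) : Field (ILS m) := (ILSpair m).2

/-- `ILS (m+1)` is (definitionally) a field of Laurent series over `ILS m`. -/
def toLS {m : ℕ} (f : ILS (m+1)) : LaurentSeries (ILS m) := f

/-- The inverse identification. -/
def ofLS {m : ℕ} (f : LaurentSeries (ILS m)) : ILS (m+1) := f

lemma toLS_zero (m : ℕ) : toLS (0 : ILS (m+1)) = (0 : LaurentSeries (ILS m)) := rfl
lemma ofLS_zero (m : ℕ) : ofLS (0 : LaurentSeries (ILS m)) = (0 : ILS (m+1)) := rfl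

/-- The variable `x_k` as an element of `ILS m` (`k` counted from the outermost
layer, so that in `ILS (n+1)` the variables are `x_0, x_1, …, x_n`). -/
def ILSvar : (m : ℕ) → ℕ → ILS m
  | 0, _ => 1
  | (_+1), 0 => ofLS (HahnSeries.single (1 : ℤ) 1)
  | (m+1), (k+1) => ofLS (HahnSeries.C (ILSvar m k))

/-- The embedding of the scalar field `K = ℚ(q)` into `ILS m`. -/
def ILSc : (m : ℕ) → (KK → ILS m)
  | 0 => id
  | (m+1) => fun c => ofLS (HahnSeries.C (ILSc m c))

/-- The constant-term operator `CT_{x_k}` on `ILS m`: it extracts the coefficient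
of `x_k^0` (an iterated Laurent series free of `x_k`), re-embedded into `ILS m`.
An element `f` is free of `x_k` exactly when `CTx m k f = f`. -/
def CTx : (m : ℕ) → ℕ → ZeroHom (ILS m) (ILS m)
  | 0, _ => ZeroHom.id _
  | (m+1), 0 =>
    { toFun := fun f => ofLS (HahnSeries.C ((toLS f).coeff 0))
      map_zero' := by
        have h : HahnSeries.C ((toLS (0 : ILS (m+1))).coeff 0) =
            (0 : LaurentSeries (ILS m)) := by
          rw [toLS_zero]; simp
        exact (congrArg ofLS h).trans (ofLS_zero m) }
  | (m+1), (k+1) =>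
    { toFun := fun f => ofLS ((toLS f).map (CTx m k))
      map_zero' := by
        have h : (toLS (0 : ILS (m+1))).map (CTx m k) = (0 : LaurentSeries (ILS m)) := by
          rw [toLS_zero]
          exact HahnSeries.map_zero (CTx m k)
        exact (congrArg ofLS h).trans (ofLS_zero m) }

/-!
Write `V_r = c_r x_{i_r}` (free of `x_k`), `y = x_k⁻¹` and `e = m - d ≥ 1`. Then
`x_k^d / ∏_r (1 - x_k/V_r) = y^e / ∏_r (y - V_r⁻¹)`, and division of `X^(e-1)` by the nodal
polynomial of the `V_r⁻¹`, followed by Lagrange interpolation of the remainder, gives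
`y Q(y) + ∑_r A_r (1 - x_k/V_r)⁻¹` with `Q` a polynomial with `x_k`-free coefficients and
`A_r = V_r^d / ∏_{s ≠ r} (1 - V_r/V_s)`. The constant term kills `y Q(y)`, and
`(1 - x_k/V_r)⁻¹` has constant term `1` if `i_r > k` (a geometric series in `x_k`) and `0` if
`i_r < k`, where it equals `1 - (1 - V_r/x_k)⁻¹` and the last term is a geometric series in
`x_k⁻¹` with constant term `1`.
-/

open HahnSeries Finset

section Layers

variable {m : ℕ}

def LSequiv (m : ℕ) : LaurentSeries (ILS m) ≃+* ILS (m+1) where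
  toFun := ofLS
  invFun := toLS
  left_inv _ := rfl
  right_inv _ := rfl
  map_add' _ _ := rfl
  map_mul' _ _ := rfl

def ILSlift (m : ℕ) : ILS m →+* ILS (m+1) := (LSequiv m).toRingHom.comp HahnSeries.C

lemma ILSc_succ (c : KK) : ILSc (m+1) c = ILSlift m (ILSc m c) := rfl

lemma ILSvar_succ (k : ℕ) : ILSvar (m+1) (k+1) = ILSlift m (ILSvar m k) := rfl

lemma ILSvar_zero_mul_ILSlift (y : ILS m) :
    ILSvar (m+1) 0 * ILSlift m y = LSequiv m (single 1 y) := by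
  show LSequiv m (single 1 1 * C y) = _
  rw [C_apply, single_mul_single, add_zero, one_mul]

lemma CTx_zero_ILSlift (y : ILS m) : CTx (m+1) 0 (ILSlift m y) = ILSlift m y := by
  show ILSlift m ((C y : LaurentSeries (ILS m)).coeff 0) = _
  rw [C_apply, coeff_single_same]

lemma CTx_succ_ILSlift (k : ℕ) (y : ILS m) :
    CTx (m+1) (k+1) (ILSlift m y) = ILSlift m (CTx m k y) := by
  show ofLS ((C y : LaurentSeries (ILS m)).map (CTx m k)) = ofLS (C (CTx m k y))
  rw [C_apply, C_apply, HahnSeries.map_single]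

end Layers

theorem CTx_add : ∀ (m k : ℕ) (f g : ILS m), CTx m k (f + g) = CTx m k f + CTx m k g
  | 0, _, _, _ => rfl
  | m+1, 0, f, g => by
      show ILSlift m ((toLS f + toLS g).coeff 0) = ILSlift m _ + ILSlift m _
      rw [coeff_add, map_add]
  | m+1, k+1, f, g => by
      show ofLS ((toLS f + toLS g).map (CTx m k)) =
        ofLS ((toLS f).map (CTx m k) + (toLS g).map (CTx m k))
      congr 1
      ext d
      exact CTx_add m k _ _

def CTxAddHom (m k : ℕ) : ILS m →+ ILS m := AddMonoidHom.mk' (CTx m k) (CTx_add m k)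

lemma CTx_sum {m k : ℕ} {ι : Type*} (t : Finset ι) (F : ι → ILS m) :
    CTx m k (∑ i ∈ t, F i) = ∑ i ∈ t, CTx m k (F i) :=
  map_sum (CTxAddHom m k) F t

lemma CTx_sub {m k : ℕ} (f g : ILS m) : CTx m k (f - g) = CTx m k f - CTx m k g :=
  map_sub (CTxAddHom m k) f g

theorem CTx_one : ∀ (m k : ℕ), CTx m k (1 : ILS m) = 1
  | 0, _ => rfl
  | m+1, 0 => by rw [← map_one (ILSlift m), CTx_zero_ILSlift]
  | m+1, k+1 => by rw [← map_one (ILSlift m), CTx_succ_ILSlift, CTx_one m k]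

theorem CTx_mul_of_CTx_eq : ∀ {m k : ℕ} {a : ILS m}, CTx m k a = a →
    ∀ f : ILS m, CTx m k (a * f) = a * CTx m k f
  | 0, _, _, _, _ => rfl
  | m+1, 0, a, ha, f => by
      obtain ⟨a₀, rfl⟩ : ∃ a₀, ILSlift m a₀ = a := ⟨(toLS a).coeff 0, ha⟩
      show ILSlift m ((C a₀ * toLS f).coeff 0) = ILSlift m a₀ * ILSlift m ((toLS f).coeff 0)
      rw [C_mul_eq_smul, coeff_smul, smul_eq_mul, map_mul]
  | m+1, k+1, a, ha, f => by
      have ha' : ∀ i, CTx m k ((toLS a).coeff i) = (toLS a).coeff i := fun i =>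
        congrArg (fun g : ILS (m+1) => (toLS g).coeff i) ha
      show ofLS ((toLS a * toLS f).map (CTx m k)) = ofLS (toLS a * (toLS f).map (CTx m k))
      congr 1
      ext d
      rw [HahnSeries.map_coeff, coeff_mul, coeff_mul_right' (toLS f).isPWO_support
        (support_map_subset _ _), CTx_sum]
      refine Finset.sum_congr rfl fun ij _ => ?_
      rw [CTx_mul_of_CTx_eq (ha' ij.1), HahnSeries.map_coeff]

def freeOf (m k : ℕ) : Subfield (ILS m) where
  carrier := {f | CTx m k f = f}
  mul_mem' {a b} ha hb := (CTx_mul_of_CTx_eq ha b).trans (congrArg _ hb)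
  one_mem' := CTx_one m k
  add_mem' {a b} ha hb := (CTx_add m k a b).trans (by rw [ha, hb])
  zero_mem' := (CTx m k).map_zero
  neg_mem' {a} ha := (map_neg (CTxAddHom m k) a).trans (congrArg _ ha)
  inv_mem' a ha := by
    show CTx m k a⁻¹ = a⁻¹
    rcases eq_or_ne a 0 with rfl | h
    · simp
    · have h1 := CTx_mul_of_CTx_eq ha a⁻¹
      rw [mul_inv_cancel₀ h, CTx_one] at h1
      exact eq_inv_of_mul_eq_one_right h1.symm

lemma mem_freeOf {m k : ℕ} {f : ILS m} : f ∈ freeOf m k ↔ CTx m k f = f := Iff.rfl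

theorem ILSc_mem_freeOf : ∀ (m k : ℕ) (c : KK), ILSc m c ∈ freeOf m k
  | 0, _, _ => rfl
  | m+1, 0, c => CTx_zero_ILSlift _
  | m+1, k+1, c => by
      rw [mem_freeOf, ILSc_succ, CTx_succ_ILSlift, ILSc_mem_freeOf m k c]

theorem ILSvar_mem_freeOf : ∀ (m : ℕ) {k i : ℕ}, i ≠ k → ILSvar m i ∈ freeOf m k
  | 0, _, _, _ => rfl
  | m+1, 0, 0, h => absurd rfl h
  | m+1, k+1, 0, _ => by
      show ofLS ((single 1 1 : LaurentSeries (ILS m)).map (CTx m k)) = ofLS (single 1 1)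
      rw [HahnSeries.map_single, CTx_one]
  | m+1, 0, i+1, _ => CTx_zero_ILSlift _
  | m+1, k+1, i+1, h => by
      rw [mem_freeOf, ILSvar_succ, CTx_succ_ILSlift,
        ILSvar_mem_freeOf m (fun h' => h (congrArg (· + 1) h'))]

theorem CTx_ILSvar_zpow : ∀ {m k : ℕ}, k < m → ∀ {e : ℤ}, e ≠ 0 → CTx m k (ILSvar m k ^ e) = 0
  | m+1, 0, _, e, he => by
      show CTx (m+1) 0 ((LSequiv m (single 1 1)) ^ e) = 0
      rw [← map_zpow₀, ← RatFunc.single_zpow]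
      show ILSlift m ((single e 1 : LaurentSeries (ILS m)).coeff 0) = 0
      rw [coeff_single_of_ne (Ne.symm he), map_zero]
  | m+1, k+1, hk, e, he => by
      rw [ILSvar_succ, ← map_zpow₀, CTx_succ_ILSlift,
        CTx_ILSvar_zpow (Nat.lt_of_succ_lt_succ hk) he, map_zero]

theorem ILSvar_ne_zero : ∀ (m k : ℕ), ILSvar m k ≠ 0
  | 0, _ => one_ne_zero
  | m+1, 0 => (map_ne_zero (LSequiv m)).mpr (single_ne_zero one_ne_zero)
  | m+1, k+1 => (map_ne_zero (ILSlift m)).mpr (ILSvar_ne_zero m k)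

theorem ILSc_injective : ∀ m : ℕ, Function.Injective (ILSc m)
  | 0 => fun _ _ h => h
  | m+1 => (ILSlift m).injective.comp (ILSc_injective m)

theorem ILSc_zero : ∀ m : ℕ, ILSc m 0 = 0
  | 0 => rfl
  | m+1 => by rw [ILSc_succ, ILSc_zero m, map_zero]

lemma ILSc_ne_zero (m : ℕ) {c : KK} (hc : c ≠ 0) : ILSc m c ≠ 0 :=
  ILSc_zero m ▸ (ILSc_injective m).ne hc

lemma ne_of_mem_freeOf {m k : ℕ} {a b : ILS m} (ha : a ∈ freeOf m k) (hb : CTx m k b = 0)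
    (hb0 : b ≠ 0) : a ≠ b := by
  rintro rfl
  exact hb0 (ha.symm.trans hb)

lemma CTx_ILSvar_self {m k : ℕ} (hk : k < m) : CTx m k (ILSvar m k) = 0 := by
  simpa using CTx_ILSvar_zpow hk one_ne_zero

theorem eq_of_ILSc_mul_ILSvar_eq {N i j : ℕ} {a b : KK} (hj : j < N) (ha : a ≠ 0)
    (h : ILSc N a * ILSvar N i = ILSc N b * ILSvar N j) : i = j ∧ a = b := by
  by_cases hij : i = j
  · subst hij
    exact ⟨rfl, ILSc_injective N (mul_right_cancel₀ (ILSvar_ne_zero N i) h)⟩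
  · have hfree := mul_mem (ILSc_mem_freeOf N j a) (ILSvar_mem_freeOf N hij)
    have hCT : CTx N j (ILSc N b * ILSvar N j) = 0 := by
      rw [CTx_mul_of_CTx_eq (ILSc_mem_freeOf N j b), CTx_ILSvar_self hj, mul_zero]
    exact absurd h (ne_of_mem_freeOf hfree hCT
      (h ▸ mul_ne_zero (ILSc_ne_zero N ha) (ILSvar_ne_zero N i)))

theorem LaurentSeries.coeff_inv_one_sub_single_one {R : Type*} [Field R] (b : R) (n : ℤ) :
    ((1 - single 1 b : LaurentSeries R)⁻¹).coeff n = if n < 0 then 0 else b ^ n.natAbs := by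
  have h : ((PowerSeries.mk fun i => b ^ i : PowerSeries R) : LaurentSeries R) *
      (1 - single 1 b) = 1 := by
    have := congrArg (HahnSeries.ofPowerSeries ℤ R)
      (congrArg (PowerSeries.rescale b) (PowerSeries.mk_one_mul_one_sub_eq_one R))
    simpa [PowerSeries.rescale_mk, PowerSeries.rescale_X, ofPowerSeries_X, C_apply,
      single_mul_single] using this
  rw [← eq_inv_of_mul_eq_one_left h, PowerSeries.coeff_coe, PowerSeries.coeff_mk]

theorem CTx_inv_one_sub_of_lt : ∀ {m k i : ℕ}, k < m → k < i → ∀ c : KK,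
    CTx m k ((1 - ILSvar m k * (ILSc m c * ILSvar m i)⁻¹)⁻¹) = 1
  | 0, _, _, hk, _, _ => absurd hk (Nat.not_lt_zero _)
  | _+1, _, 0, _, hi, _ => absurd hi (Nat.not_lt_zero _)
  | m+1, 0, i+1, _, _, c => by
      rw [ILSc_succ, ILSvar_succ, ← map_mul, ← map_inv₀, ILSvar_zero_mul_ILSlift,
        ← map_one (LSequiv m), ← map_sub, ← map_inv₀]
      show ILSlift m (((1 - single 1 _)⁻¹ : LaurentSeries (ILS m)).coeff 0) = 1
      rw [LaurentSeries.coeff_inv_one_sub_single_one, if_neg (lt_irrefl 0), Int.natAbs_zero,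
        pow_zero, map_one]
  | m+1, k+1, i+1, hk, hi, c => by
      rw [ILSc_succ, ILSvar_succ, ILSvar_succ, ← map_mul, ← map_inv₀, ← map_mul,
        ← map_one (ILSlift m), ← map_sub, ← map_inv₀, CTx_succ_ILSlift,
        CTx_inv_one_sub_of_lt (Nat.lt_of_succ_lt_succ hk) (Nat.lt_of_succ_lt_succ hi), map_one]

theorem CTx_inv_one_sub_rev_of_lt : ∀ {m k i : ℕ}, k < m → i < k → ∀ c : KK,
    CTx m k ((1 - ILSc m c * ILSvar m i * (ILSvar m k)⁻¹)⁻¹) = 1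
  | 0, _, _, hk, _, _ => absurd hk (Nat.not_lt_zero _)
  | _+1, 0, _, _, hi, _ => absurd hi (Nat.not_lt_zero _)
  | m+1, k+1, 0, hk, _, c => by
      have hb : ILSc (m+1) c * ILSvar (m+1) 0 * (ILSvar (m+1) (k+1))⁻¹ =
          LSequiv m (single 1 (ILSc m c * (ILSvar m k)⁻¹)) := by
        rw [← ILSvar_zero_mul_ILSlift, map_mul, map_inv₀, ← ILSc_succ, ← ILSvar_succ]
        ring
      rw [hb, ← map_one (LSequiv m), ← map_sub, ← map_inv₀]
      show ofLS (((1 - single 1 _)⁻¹ : LaurentSeries (ILS m)).map (CTx m k)) = ofLS 1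
      congr 1
      ext n
      rw [HahnSeries.map_coeff, LaurentSeries.coeff_inv_one_sub_single_one, coeff_one]
      rcases lt_trichotomy n 0 with hn | rfl | hn
      · rw [if_pos hn, if_neg hn.ne, map_zero]
      · simp [CTx_one]
      · rw [if_neg hn.not_gt, if_neg hn.ne', mul_pow,
          CTx_mul_of_CTx_eq (pow_mem (ILSc_mem_freeOf m k c) _), inv_pow,
          ← zpow_natCast (ILSvar m k),
          ← zpow_neg, CTx_ILSvar_zpow (Nat.lt_of_succ_lt_succ hk) (by omega), mul_zero]
  | m+1, k+1, i+1, hk, hi, c => by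
      rw [ILSc_succ, ILSvar_succ, ILSvar_succ, ← map_mul, ← map_inv₀, ← map_mul,
        ← map_one (ILSlift m), ← map_sub, ← map_inv₀, CTx_succ_ILSlift,
        CTx_inv_one_sub_rev_of_lt (Nat.lt_of_succ_lt_succ hk) (Nat.lt_of_succ_lt_succ hi),
        map_one]

lemma inv_one_sub_eq_one_sub_inv_one_sub_inv {F : Type*} [Field F] {a : F} (ha0 : a ≠ 0)
    (ha1 : a ≠ 1) : (1 - a)⁻¹ = 1 - (1 - a⁻¹)⁻¹ := by
  have h1 : 1 - a ≠ 0 := sub_ne_zero.mpr (Ne.symm ha1)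
  have h2 : 1 - a⁻¹ ≠ 0 := sub_ne_zero.mpr (Ne.symm (inv_ne_one.mpr ha1))
  field_simp
  ring

theorem CTx_inv_one_sub_of_gt {m k i : ℕ} (hk : k < m) (hi : i < k) {c : KK} (hc : c ≠ 0) :
    CTx m k ((1 - ILSvar m k * (ILSc m c * ILSvar m i)⁻¹)⁻¹) = 0 := by
  have hV0 : ILSc m c * ILSvar m i ≠ 0 := mul_ne_zero (ILSc_ne_zero m hc) (ILSvar_ne_zero m i)
  have hxV : ILSvar m k ≠ ILSc m c * ILSvar m i :=
    (ne_of_mem_freeOf (mul_mem (ILSc_mem_freeOf m k c) (ILSvar_mem_freeOf m hi.ne))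
      (CTx_ILSvar_self hk) (ILSvar_ne_zero m k)).symm
  rw [inv_one_sub_eq_one_sub_inv_one_sub_inv (mul_ne_zero (ILSvar_ne_zero m k) (inv_ne_zero hV0))
      (by rwa [ne_eq, mul_inv_eq_one₀ hV0]), mul_inv_rev, inv_inv, CTx_sub, CTx_one,
    CTx_inv_one_sub_rev_of_lt hk hi, sub_self]

theorem CTx_inv_one_sub {m k i : ℕ} (hk : k < m) (hik : i ≠ k) {c : KK} (hc : c ≠ 0) :
    CTx m k ((1 - ILSvar m k * (ILSc m c * ILSvar m i)⁻¹)⁻¹) = if k < i then 1 else 0 := by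
  rcases lt_or_gt_of_ne hik with h | h
  · rw [if_neg h.not_gt, CTx_inv_one_sub_of_gt hk h hc]
  · rw [if_pos h, CTx_inv_one_sub_of_lt hk h]

open Polynomial Lagrange

theorem eval₂_div_prod_sub_eq_sum {K F ι : Type*} [Field K] [Field F] [Fintype ι]
    [DecidableEq ι] (f : K →+* F) {v : ι → K} (hv : Function.Injective v) {p : K[X]}
    (hp : p.degree < Fintype.card ι) {y : F} (hy : ∀ i, y ≠ f (v i)) :
    p.eval₂ f y / ∏ i, (y - f (v i)) =
      ∑ i, f (nodalWeight univ v i * p.eval (v i)) / (y - f (v i)) := by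
  have hfv : Set.InjOn (f ∘ v) (univ : Finset ι) := (f.injective.comp hv).injOn
  have hp' : (p.map f).degree < #(univ : Finset ι) := by rwa [degree_map, card_univ]
  have hP0 : ∏ i, (y - f (v i)) ≠ 0 := prod_ne_zero_iff.mpr fun i _ => sub_ne_zero.mpr (hy i)
  rw [← eval_map, eq_interpolate hfv hp',
    eval_interpolate_not_at_node (v := f ∘ v) _ (fun i _ => hy i), eval_nodal]
  simp only [Function.comp_apply]
  rw [mul_div_cancel_left₀ _ hP0]
  refine sum_congr rfl fun i _ => ?_
  simp only [nodalWeight, prod_inv_distrib, eval_map, eval₂_at_apply, map_mul, map_inv₀,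
    map_prod, map_sub, div_eq_mul_inv, Function.comp_apply]
  ring

theorem pow_succ_div_prod_sub_eq {K F ι : Type*} [Field K] [Field F] [Fintype ι]
    [DecidableEq ι] (f : K →+* F) {w : ι → K} (hw : Function.Injective w) {y : F}
    (hy : ∀ i, y ≠ f (w i)) (j : ℕ) :
    y ^ (j + 1) / ∏ i, (y - f (w i)) =
      y * (X ^ j /ₘ nodal univ w).eval₂ f y +
        ∑ i, f (nodalWeight univ w i * w i ^ j) * (y / (y - f (w i))) := by
  have hdiv := modByMonic_add_div (X ^ j) (nodal univ w)
  have hP0 : ∏ i, (y - f (w i)) ≠ 0 := prod_ne_zero_iff.mpr fun i _ => sub_ne_zero.mpr (hy i)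
  have hdeg : (X ^ j %ₘ nodal univ w).degree < Fintype.card ι := by
    rw [← card_univ, ← degree_nodal (v := w)]
    exact degree_modByMonic_lt _ nodal_monic
  have hRw : ∀ i, (X ^ j %ₘ nodal univ w).eval (w i) = w i ^ j := fun i => by
    simpa [eval_nodal_at_node] using congrArg (eval (w i)) hdiv
  have hR := eval₂_div_prod_sub_eq_sum f hw hdeg hy
  have hP : (nodal univ w).eval₂ f y = ∏ i, (y - f (w i)) := by
    simp [nodal, eval₂_finsetProd]
  have hy' := congrArg (eval₂ f y) hdiv
  rw [eval₂_add, eval₂_mul, eval₂_X_pow, hP] at hy'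
  simp only [hRw] at hR
  calc y ^ (j + 1) / ∏ i, (y - f (w i))
      = y * (X ^ j /ₘ nodal univ w).eval₂ f y +
          y * ((X ^ j %ₘ nodal univ w).eval₂ f y / ∏ i, (y - f (w i))) := by
        rw [pow_succ', ← hy']
        field_simp
        ring
    _ = _ := by
        rw [hR, mul_sum]
        refine congrArg₂ _ rfl (sum_congr rfl fun i _ => ?_)
        ring

lemma prod_one_sub_mul_inv {F ι : Type*} [Field F] (s : Finset ι) (V : ι → F) {a : F}
    (ha : a ≠ 0) : ∏ i ∈ s, (1 - a * (V i)⁻¹) = a ^ #s * ∏ i ∈ s, (a⁻¹ - (V i)⁻¹) := by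
  rw [← prod_const, ← prod_mul_distrib]
  refine prod_congr rfl fun i _ => ?_
  rw [mul_sub, mul_inv_cancel₀ ha]

lemma inv_prod_inv_sub_inv_mul_inv_pow {F ι : Type*} [Field F] (s : Finset ι) (V : ι → F)
    {a : F} (ha : a ≠ 0) {d : ℤ} {j : ℕ} (hdj : d + j = #s) :
    (∏ k ∈ s, (a⁻¹ - (V k)⁻¹))⁻¹ * a⁻¹ ^ j = a ^ d * (∏ k ∈ s, (1 - a * (V k)⁻¹))⁻¹ := by
  have had : a ^ d = a ^ #s * a⁻¹ ^ j := by
    rw [eq_sub_of_add_eq hdj, zpow_sub₀ ha, zpow_natCast, zpow_natCast, inv_pow, div_eq_mul_inv]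
  rw [prod_one_sub_mul_inv s V ha, had]
  field_simp

theorem exists_zpow_mul_inv_prod_one_sub_eq {F ι : Type*} [Field F] [Fintype ι] [DecidableEq ι]
    (L : Subfield F) {V : ι → F} (hVL : ∀ i, V i ∈ L) (hV : Function.Injective V)
    (hV0 : ∀ i, V i ≠ 0) {x : F} (hx0 : x ≠ 0) (hxV : ∀ i, x ≠ V i) {d : ℤ}
    (hd : d < Fintype.card ι) :
    ∃ q : L[X], x ^ d * (∏ i, (1 - x * (V i)⁻¹))⁻¹ =
      x⁻¹ * q.eval₂ L.subtype x⁻¹ +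
        ∑ i, V i ^ d * (∏ k ∈ univ.erase i, (1 - V i * (V k)⁻¹))⁻¹ * (1 - x * (V i)⁻¹)⁻¹ := by
  obtain ⟨j, hj⟩ : ∃ j : ℕ, (j : ℤ) = Fintype.card ι - 1 - d :=
    ⟨_, Int.toNat_of_nonneg (by omega)⟩
  let w : ι → L := fun i => ⟨(V i)⁻¹, inv_mem (hVL i)⟩
  have hw : Function.Injective w := fun a b h => hV (inv_injective (congrArg Subtype.val h))
  have hy : ∀ i, x⁻¹ ≠ L.subtype (w i) := fun i h => hxV i (inv_injective h)
  refine ⟨X ^ j /ₘ nodal univ w, ?_⟩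
  have hLHS : x ^ d * (∏ i, (1 - x * (V i)⁻¹))⁻¹ = x⁻¹ ^ (j + 1) / ∏ i, (x⁻¹ - (V i)⁻¹) := by
    have hdj : d + (j + 1 : ℕ) = #(univ : Finset ι) := by push_cast [card_univ]; omega
    rw [← inv_prod_inv_sub_inv_mul_inv_pow univ V hx0 hdj, div_eq_mul_inv, mul_comm]
  refine hLHS.trans ((pow_succ_div_prod_sub_eq L.subtype hw hy j).trans ?_)
  refine congrArg₂ _ rfl (sum_congr rfl fun i _ => ?_)
  have hwi : L.subtype (nodalWeight univ w i * w i ^ j) =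
      (∏ k ∈ univ.erase i, ((V i)⁻¹ - (V k)⁻¹))⁻¹ * (V i)⁻¹ ^ j := by
    simp [nodalWeight, w, prod_inv_distrib]
  have hdj : d + j = #(univ.erase i) := by
    rw [card_erase_of_mem (mem_univ i), card_univ, Nat.cast_sub (Fintype.card_pos_iff.mpr ⟨i⟩)]
    omega
  have hxi : x⁻¹ / (x⁻¹ - (V i)⁻¹) = (1 - x * (V i)⁻¹)⁻¹ := by
    rw [← inv_div, sub_div, div_self (inv_ne_zero hx0), div_eq_mul_inv, inv_inv, mul_comm x]
  rw [hwi, inv_prod_inv_sub_inv_mul_inv_pow _ _ (hV0 i) hdj, ← hxi]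
  rfl

lemma CTx_inv_mul_eval₂ {N k : ℕ} (hk : k < N) (q : (freeOf N k)[X]) :
    CTx N k ((ILSvar N k)⁻¹ * q.eval₂ (freeOf N k).subtype (ILSvar N k)⁻¹) = 0 := by
  rw [eval₂_eq_sum_range, mul_sum, CTx_sum]
  refine sum_eq_zero fun i _ => ?_
  rw [mul_left_comm, CTx_mul_of_CTx_eq (a := (freeOf N k).subtype (q.coeff i)) (q.coeff i).2,
    ← pow_succ', inv_pow, ← zpow_natCast, ← zpow_neg, CTx_ILSvar_zpow hk (by omega), mul_zero]

theorem CTx_zpow_mul_inv_prod {N k : ℕ} (hk : k < N) {ι : Type*} [Fintype ι] [DecidableEq ι]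
    {V : ι → ILS N} (hVfree : ∀ i, V i ∈ freeOf N k) (hV : Function.Injective V)
    (hV0 : ∀ i, V i ≠ 0) {d : ℤ} (hd : d < Fintype.card ι) :
    CTx N k (ILSvar N k ^ d * (∏ i, (1 - ILSvar N k * (V i)⁻¹))⁻¹) =
      ∑ i, V i ^ d * (∏ j ∈ univ.erase i, (1 - V i * (V j)⁻¹))⁻¹ *
        CTx N k ((1 - ILSvar N k * (V i)⁻¹)⁻¹) := by
  have hxV : ∀ i, ILSvar N k ≠ V i := fun i =>
    (ne_of_mem_freeOf (hVfree i) (CTx_ILSvar_self hk) (ILSvar_ne_zero N k)).symm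
  obtain ⟨q, hq⟩ := exists_zpow_mul_inv_prod_one_sub_eq (freeOf N k) hVfree hV hV0
    (ILSvar_ne_zero N k) hxV hd
  rw [hq, CTx_add, CTx_inv_mul_eval₂ hk, zero_add, CTx_sum]
  refine sum_congr rfl fun i _ => CTx_mul_of_CTx_eq ?_ _
  exact mul_mem (zpow_mem (hVfree i) d) (inv_mem (prod_mem fun j _ =>
    sub_mem (one_mem _) (mul_mem (hVfree i) (inv_mem (hVfree j)))))

theorem gessel_xin_extraction_general (n m : ℕ) (k : ℕ) (hk : k ≤ n)
    (idx : Fin m → ℕ) (hidx_le : ∀ r, idx r ≤ n) (hidx_ne : ∀ r, idx r ≠ k)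
    (c : Fin m → KK) (hc0 : ∀ r, c r ≠ 0)
    (hcne : ∀ r s : Fin m, r ≠ s → idx r = idx s → c r ≠ c s)
    (Dset : Finset ℤ) (hD : ∀ d ∈ Dset, d ≤ (m : ℤ) - 1)
    (u : ℤ → ILS (n+1)) (hu : ∀ d, CTx (n+1) k (u d) = u d) :
    CTx (n+1) k ((∑ d ∈ Dset, u d * (ILSvar (n+1) k) ^ d) *
        (∏ r, (1 - ILSvar (n+1) k * (ILSc (n+1) (c r) * ILSvar (n+1) (idx r))⁻¹))⁻¹) =
      ∑ r ∈ Finset.univ.filter (fun r : Fin m => k < idx r),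
        (∑ d ∈ Dset, u d * (ILSc (n+1) (c r) * ILSvar (n+1) (idx r)) ^ d) *
          (∏ s ∈ Finset.univ.filter (fun s : Fin m => s ≠ r),
            (1 - (ILSc (n+1) (c r) * ILSvar (n+1) (idx r)) *
              (ILSc (n+1) (c s) * ILSvar (n+1) (idx s))⁻¹))⁻¹ := by
  have hkN : k < n + 1 := Nat.lt_succ_of_le hk
  set V : Fin m → ILS (n+1) := fun r => ILSc (n+1) (c r) * ILSvar (n+1) (idx r)
  have hVfree : ∀ r, V r ∈ freeOf (n+1) k := fun r =>
    mul_mem (ILSc_mem_freeOf _ k (c r)) (ILSvar_mem_freeOf _ (hidx_ne r))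
  have hVinj : Function.Injective V := fun r s h => by
    obtain ⟨hi, hcrs⟩ := eq_of_ILSc_mul_ILSvar_eq (Nat.lt_succ_of_le (hidx_le s)) (hc0 r) h
    by_contra hrs
    exact hcne r s hrs hi hcrs
  have hV0 : ∀ r, V r ≠ 0 := fun r => mul_ne_zero (ILSc_ne_zero _ (hc0 r)) (ILSvar_ne_zero _ _)
  have hterm : ∀ d ∈ Dset, CTx (n+1) k (u d * ILSvar (n+1) k ^ d *
      (∏ r, (1 - ILSvar (n+1) k * (V r)⁻¹))⁻¹) = ∑ r ∈ univ.filter (fun r => k < idx r),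
        u d * V r ^ d * (∏ s ∈ univ.filter (fun s => s ≠ r), (1 - V r * (V s)⁻¹))⁻¹ := by
    intro d hd
    rw [mul_assoc, CTx_mul_of_CTx_eq (hu d), CTx_zpow_mul_inv_prod hkN hVfree hVinj hV0
      (by simpa using Int.lt_of_le_sub_one (hD d hd)), sum_filter, mul_sum]
    refine sum_congr rfl fun r _ => ?_
    rw [CTx_inv_one_sub hkN (hidx_ne r) (hc0 r), filter_ne']
    split_ifs <;> ring
  rw [sum_mul, CTx_sum, sum_congr rfl hterm, sum_comm]
  exact sum_congr rfl fun r _ => (sum_mul ..).symm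

/-- **Lemma 4.1 (Gessel–Xin constant-term extraction).** Work in
`K⟨⟨x_n,…,x_0⟩⟩ = ILS (n+1)`.  Let `m ≥ 1`, `k ≤ n`, and let
`p = ∑_{d ∈ D} u_d x_k^d` be a Laurent polynomial in `x_k` of degree at most
`m-1` (each exponent `d ≤ m-1`, each coefficient `u_d` free of `x_k`).  Let
`0 ≤ i_1 ≤ ⋯ ≤ i_m ≤ n` with all `i_r ≠ k`, and `c_1,…,c_m ∈ K∖{0}` with
`c_r ≠ c_s` whenever `i_r = i_s`.  Then, for
`f = p / ∏_{r=1}^m (1 - x_k/(c_r x_{i_r}))`,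
`CT_{x_k} f = ∑_{r : i_r > k} (f ⋅ (1 - x_k/(c_r x_{i_r})))|_{x_k = c_r x_{i_r}}`,
the substitution `x_k = c_r x_{i_r}` being performed in the expression
`f ⋅ (1 - x_k/(c_r x_{i_r})) = p / ∏_{s ≠ r} (1 - x_k/(c_s x_{i_s}))`. -/
theorem gessel_xin_extraction (n m : ℕ) (hm : 1 ≤ m) (k : ℕ) (hk : k ≤ n)
    (idx : Fin m → ℕ) (hidx_le : ∀ r, idx r ≤ n) (hidx_ne : ∀ r, idx r ≠ k)
    (hidx_mono : Monotone idx)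
    (c : Fin m → KK) (hc0 : ∀ r, c r ≠ 0)
    (hcne : ∀ r s : Fin m, r ≠ s → idx r = idx s → c r ≠ c s)
    (Dset : Finset ℤ) (hD : ∀ d ∈ Dset, d ≤ (m : ℤ) - 1)
    (u : ℤ → ILS (n+1)) (hu : ∀ d, CTx (n+1) k (u d) = u d) :
    CTx (n+1) k ((∑ d ∈ Dset, u d * (ILSvar (n+1) k) ^ d) *
        (∏ r, (1 - ILSvar (n+1) k * (ILSc (n+1) (c r) * ILSvar (n+1) (idx r))⁻¹))⁻¹) =
      ∑ r ∈ Finset.univ.filter (fun r : Fin m => k < idx r),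
        (∑ d ∈ Dset, u d * (ILSc (n+1) (c r) * ILSvar (n+1) (idx r)) ^ d) *
          (∏ s ∈ Finset.univ.filter (fun s : Fin m => s ≠ r),
            (1 - (ILSc (n+1) (c r) * ILSvar (n+1) (idx r)) *
              (ILSc (n+1) (c s) * ILSvar (n+1) (idx s))⁻¹))⁻¹ :=
  gessel_xin_extraction_general n m k hk idx hidx_le hidx_ne c hc0 hcne Dset hD u hu
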